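/- arXiv:1209.2693 — 3 statements merged into one kernel-verified Lean document; each statement's English description precedes it below -/
import Mathlib

section
/- For an irreducible Markov chain on a finite state space with stationary distribution μ and diameter D := max_{s,s'} T(s,s'), every state s satisfies μ(s) ≥ 1/(2D). -/
/-!
Let `τ s = 1 + ∑ u, P s u * h u s` be the expected return time to `s`. First-step analysis says
that the vector `1 + P (h · s)` agrees with `h · s` except at `s`, where it equals `τ s`
instead of `0`. Since `μ P = μ`, the `μ`-average of `1 + P (h · s)` exceeds that of `h · s`
by exactly `1`; by first-step analysis it exceeds it by `μ s * τ s`. This is Kac's formula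
`μ s * τ s = 1`, and `τ s ≤ 1 + D ≤ 2 * D` because `D ≥ 1` as soon as there are two states.
-/

open Finset Matrix

namespace MarkovChain

variable {S : Type*} [Fintype S] (P : Matrix S S ℝ) (h : S → S → ℝ)

def returnTime (s : S) : ℝ := 1 + ∑ u, P s u * h u s

variable {P h}

lemma one_add_mulVec_hittingTime_eq [DecidableEq S] (hdiag : ∀ s, h s s = 0)
    (hrec : ∀ s t, s ≠ t → h s t = 1 + ∑ u, P s u * h u t) (s : S) :
    1 + P *ᵥ (fun u => h u s) = (fun t => h t s) + Pi.single s (returnTime P h s) := by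
  funext t
  by_cases hts : t = s
  · subst hts
    simp [hdiag, returnTime, mulVec, dotProduct]
  · simp [hts, hrec t s hts, mulVec, dotProduct]

lemma dotProduct_one_add_mulVec_of_stationary {μ : S → ℝ} (hμsum : ∑ s, μ s = 1)
    (hμstat : vecMul μ P = μ) (f : S → ℝ) :
    μ ⬝ᵥ (1 + P *ᵥ f) = 1 + μ ⬝ᵥ f := by
  rw [dotProduct_add, dotProduct_one, dotProduct_mulVec, hμstat, hμsum]

theorem stationary_mul_returnTime [DecidableEq S] {μ : S → ℝ} (hμsum : ∑ s, μ s = 1)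
    (hμstat : vecMul μ P = μ) (hdiag : ∀ s, h s s = 0)
    (hrec : ∀ s t, s ≠ t → h s t = 1 + ∑ u, P s u * h u t) (s : S) :
    μ s * returnTime P h s = 1 := by
  have := dotProduct_one_add_mulVec_of_stationary hμsum hμstat fun u => h u s
  rw [one_add_mulVec_hittingTime_eq hdiag hrec, dotProduct_add, dotProduct_single] at this
  linarith

lemma sum_mul_hittingTime_nonneg (hPnonneg : ∀ s t, 0 ≤ P s t)
    (hnonneg : ∀ s t, 0 ≤ h s t) (s t : S) : 0 ≤ ∑ u, P s u * h u t :=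
  sum_nonneg fun u _ => mul_nonneg (hPnonneg s u) (hnonneg u t)

lemma one_le_returnTime (hPnonneg : ∀ s t, 0 ≤ P s t) (hnonneg : ∀ s t, 0 ≤ h s t) (s : S) :
    1 ≤ returnTime P h s :=
  le_add_of_nonneg_right (sum_mul_hittingTime_nonneg hPnonneg hnonneg s s)

lemma one_le_hittingTime_of_ne (hPnonneg : ∀ s t, 0 ≤ P s t) (hnonneg : ∀ s t, 0 ≤ h s t)
    (hrec : ∀ s t, s ≠ t → h s t = 1 + ∑ u, P s u * h u t) {s t : S} (hst : s ≠ t) :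
    1 ≤ h s t :=
  hrec s t hst ▸ le_add_of_nonneg_right (sum_mul_hittingTime_nonneg hPnonneg hnonneg s t)

lemma returnTime_le_one_add (hPnonneg : ∀ s t, 0 ≤ P s t) (hProw : ∀ s, ∑ t, P s t = 1)
    {s : S} {D : ℝ} (hle : ∀ u, h u s ≤ D) : returnTime P h s ≤ 1 + D := by
  have : ∑ u, P s u * h u s ≤ ∑ u, P s u * D :=
    sum_le_sum fun u _ => mul_le_mul_of_nonneg_left (hle u) (hPnonneg s u)
  rw [← sum_mul, hProw, one_mul] at this
  exact add_le_add_right this 1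

end MarkovChain

open MarkovChain

theorem stationary_ge_inv_two_diameter_general {S : Type*} [Fintype S] [DecidableEq S]
    [Nontrivial S]
    (P : Matrix S S ℝ)
    (hPnonneg : ∀ s t, 0 ≤ P s t)
    (hProw : ∀ s, ∑ t, P s t = 1)
    (μ : S → ℝ) (hμsum : ∑ s, μ s = 1)
    (hμstat : Matrix.vecMul μ P = μ)
    (h : S → S → ℝ)
    (hnonneg : ∀ s t, 0 ≤ h s t)
    (hdiag : ∀ s, h s s = 0)
    (hrec : ∀ s t, s ≠ t → h s t = 1 + ∑ u, P s u * h u t)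
    (D : ℝ) (hD : D = Finset.univ.sup' Finset.univ_nonempty
      (fun p : S × S => h p.1 p.2)) :
    ∀ s : S, 1 / (2 * D) ≤ μ s := by
  intro s
  have hle : ∀ u v, h u v ≤ D := fun u v =>
    hD ▸ le_sup' (fun p : S × S => h p.1 p.2) (mem_univ (u, v))
  have hD1 : 1 ≤ D := by
    obtain ⟨t, hts⟩ := exists_ne s
    exact (one_le_hittingTime_of_ne hPnonneg hnonneg hrec hts).trans (hle t s)
  have hτ : returnTime P h s ≤ 2 * D :=
    (returnTime_le_one_add hPnonneg hProw fun u => hle u s).trans (by linarith)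
  calc 1 / (2 * D) ≤ 1 / returnTime P h s :=
        one_div_le_one_div_of_le (by linarith [one_le_returnTime hPnonneg hnonneg s]) hτ
    _ = μ s :=
        (eq_one_div_of_mul_eq_one_left (stationary_mul_returnTime hμsum hμstat hdiag hrec s)).symm

/-- For an irreducible Markov chain on a finite state space (with at least two
states) with stationary distribution `μ` and diameter
`D = max_{s,s'} h s s'` (maximal expected hitting time), every state `s`
satisfies `μ s ≥ 1 / (2 * D)`. -/
theorem stationary_ge_inv_two_diameter {S : Type*} [Fintype S] [DecidableEq S]
    [Nontrivial S]
    (P : Matrix S S ℝ)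
    (hPnonneg : ∀ s t, 0 ≤ P s t)
    (hProw : ∀ s, ∑ t, P s t = 1)
    (hirred : ∀ s t : S, ∃ n : ℕ, 0 < (P ^ n) s t)
    (μ : S → ℝ) (hμnonneg : ∀ s, 0 ≤ μ s) (hμsum : ∑ s, μ s = 1)
    (hμstat : Matrix.vecMul μ P = μ)
    (h : S → S → ℝ)
    (hnonneg : ∀ s t, 0 ≤ h s t)
    (hdiag : ∀ s, h s s = 0)
    (hrec : ∀ s t, s ≠ t → h s t = 1 + ∑ u, P s u * h u t)
    (D : ℝ) (hD : D = Finset.univ.sup' Finset.univ_nonempty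
      (fun p : S × S => h p.1 p.2)) :
    ∀ s : S, 1 / (2 * D) ≤ μ s :=
  stationary_ge_inv_two_diameter_general P hPnonneg hProw μ hμsum hμstat h hnonneg hdiag hrec D hD
end

section
/- Let z_1, …, z_m be a sequence of nonnegative reals with z_k ≤ Z_k := max{1, ∑_{i<k} z_i} for all k. Then ∑_{k=1}^m z_k / √Z_k ≤ (√2 + 1)·√(∑_{k=1}^m z_k). -/
/-! With `S k = ∑_{i<k} z i`, each term `z k / √(max 1 (S k))` is at most
`(√2 + 1) (√(S (k + 1)) - √(S k))`, because `S k` and `z k` are both at most `max 1 (S k)`;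
these bounds telescope to `(√2 + 1) √(S m)`. -/

open Finset

/- Writing `a = √S` and `b = √(S + t)`, we have `t = (b - a)(b + a)`, and both `a ≤ √M` and
`b ≤ √(2M)`, so `b + a ≤ (√2 + 1) √M`. -/
theorem div_sqrt_le_mul_sqrt_add_sub_sqrt {S t M : ℝ} (hS : 0 ≤ S) (ht : 0 ≤ t)
    (hSM : S ≤ M) (htM : t ≤ M) :
    t / √M ≤ (√2 + 1) * (√(S + t) - √S) := by
  have hmono : √S ≤ √(S + t) := Real.sqrt_le_sqrt (by linarith)
  have hsum : √(S + t) + √S ≤ (√2 + 1) * √M := by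
    have hb : √(S + t) ≤ √2 * √M := by
      rw [← Real.sqrt_mul zero_le_two]
      exact Real.sqrt_le_sqrt (by linarith)
    have ha : √S ≤ √M := Real.sqrt_le_sqrt hSM
    linarith
  have hfactor : t = (√(S + t) - √S) * (√(S + t) + √S) := by
    rw [mul_comm, ← sq_sub_sq, Real.sq_sqrt (by linarith), Real.sq_sqrt hS]
    ring
  refine div_le_of_le_mul₀ (Real.sqrt_nonneg M)
    (mul_nonneg (by positivity) (sub_nonneg.mpr hmono)) ?_
  calc t = (√(S + t) - √S) * (√(S + t) + √S) := hfactor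
    _ ≤ (√(S + t) - √S) * ((√2 + 1) * √M) :=
      mul_le_mul_of_nonneg_left hsum (sub_nonneg.mpr hmono)
    _ = (√2 + 1) * (√(S + t) - √S) * √M := by ring

/-- If `z 0, …, z (m-1)` are nonnegative reals with
`z k ≤ Z k := max 1 (∑_{i<k} z i)` for all `k`, then
`∑ k, z k / √(Z k) ≤ (√2 + 1) √(∑ k, z k)`. -/
theorem sum_over_sqrt_running_total (m : ℕ) (z : ℕ → ℝ)
    (hnonneg : ∀ k < m, 0 ≤ z k)
    (hle : ∀ k < m, z k ≤ max 1 (∑ i ∈ Finset.range k, z i)) :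
    ∑ k ∈ Finset.range m, z k / Real.sqrt (max 1 (∑ i ∈ Finset.range k, z i)) ≤
      (Real.sqrt 2 + 1) * Real.sqrt (∑ k ∈ Finset.range m, z k) := by
  have hstep : ∀ k ∈ range m, z k / √(max 1 (∑ i ∈ range k, z i)) ≤
      (√2 + 1) * (√(∑ i ∈ range (k + 1), z i) - √(∑ i ∈ range k, z i)) := by
    intro k hk
    have hkm := mem_range.mp hk
    rw [sum_range_succ]
    exact div_sqrt_le_mul_sqrt_add_sub_sqrt
      (sum_nonneg fun i hi => hnonneg i ((mem_range.mp hi).trans hkm))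
      (hnonneg k hkm) (le_max_right _ _) (hle k hkm)
  calc _ ≤ ∑ k ∈ range m, (√2 + 1) * (√(∑ i ∈ range (k + 1), z i) - √(∑ i ∈ range k, z i)) :=
        sum_le_sum hstep
    _ = (√2 + 1) * √(∑ k ∈ range m, z k) := by
      rw [← mul_sum, sum_range_sub (fun k => √(∑ i ∈ range k, z i))]
      simp
end

section
/- Suppose in a sequence of T steps, each step is assigned one of C colors, the steps are partitioned into consecutive episodes, and each episode (except possibly the first) is ended exactly when the number of steps of some color within the current episode reaches the total number of steps of that color in all previous episodes (doubling criterion, with count at least 1). Then the number of episodes m satisfies m ≤ C·log₂(8T/C). -/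
/-!
Fix a color `c` and look at the non-final episodes that end because of `c`. Each of them at
least doubles the count of `c` (from `0` it goes to at least `1`), so if there are `s_c` of them
then `2 ^ s_c ≤ max 1 (2 N_c) ≤ 2 N_c + 1`, where `N_c` is the final count of `c`. Every non-final
episode ends because of some color, so `∑ s_c ≥ m - 1`, and multiplying over the colors,
`2 ^ (m - 1) ≤ ∏ (2 N_c + 1)`. By AM-GM with `∑ (2 N_c + 1) = 2 T + C ≤ 4 T` this is at most
`(4 T / C) ^ C`, so `m - 1 ≤ C log₂ (4 T / C)` and `m ≤ C log₂ (8 T / C)`.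
-/

open Finset

theorem card_filter_range_eq_add {p : ℕ → Prop} [DecidablePred p] {a b : ℕ} (hab : a ≤ b) :
    #{i ∈ range b | p i} = #{i ∈ range a | p i} + #{i ∈ Ico a b | p i} := by
  simp only [card_filter]
  exact (sum_range_add_sum_Ico _ hab).symm

theorem two_pow_card_le_of_doubling {f : ℕ → ℕ} {S : Finset ℕ} {m : ℕ} (hS : S ⊆ range m)
    (hmono : ∀ k < m, f k ≤ f (k + 1)) (hdouble : ∀ k ∈ S, f k + max 1 (f k) ≤ f (k + 1)) :
    2 ^ #S ≤ max 1 (2 * f m) := by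
  induction m generalizing S with
  | zero => simp [subset_empty.mp hS]
  | succ m ih =>
    have hS' : S.erase m ⊆ range m := fun k hk => by
      have hk_lt := mem_range.mp (hS (mem_of_mem_erase hk))
      exact mem_range.mpr (lt_of_le_of_ne (Nat.le_of_lt_succ hk_lt) (ne_of_mem_erase hk))
    have ih' := ih hS' (fun k hk => hmono k (by omega))
      (fun k hk => hdouble k (mem_of_mem_erase hk))
    have hstep := hmono m (by omega)
    by_cases hm : m ∈ S
    · have := hdouble m hm
      rw [← card_erase_add_one hm, pow_succ]
      omega
    · rw [erase_eq_of_notMem hm] at ih'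
      omega

theorem Real.prod_le_sum_div_card_pow {ι : Type*} (s : Finset ι) {z : ι → ℝ}
    (hz : ∀ i ∈ s, 0 ≤ z i) : ∏ i ∈ s, z i ≤ ((∑ i ∈ s, z i) / #s) ^ #s := by
  rcases s.eq_empty_or_nonempty with rfl | hs
  · simp
  have hcard : (#s : ℝ) ≠ 0 := by exact_mod_cast hs.card_pos.ne'
  have hamgm := Real.geom_mean_le_arith_mean_weighted s (fun _ => (#s : ℝ)⁻¹) z
    (fun _ _ => by positivity) (by simp [hcard]) hz
  rw [Real.finsetProd_rpow s z hz, ← mul_sum, inv_mul_eq_div] at hamgm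
  calc ∏ i ∈ s, z i = ((∏ i ∈ s, z i) ^ (#s : ℝ)⁻¹) ^ #s :=
        (Real.rpow_inv_natCast_pow (prod_nonneg hz) hs.card_pos.ne').symm
    _ ≤ ((∑ i ∈ s, z i) / #s) ^ #s :=
        pow_le_pow_left₀ (Real.rpow_nonneg (prod_nonneg hz) _) hamgm _

theorem card_le_sum_card_filter {α β : Type*} [DecidableEq α] {s : Finset α} {t : Finset β}
    {p : α → β → Prop} [∀ x c, Decidable (p x c)] (h : ∀ x ∈ s, ∃ c ∈ t, p x c) :
    #s ≤ ∑ c ∈ t, #{x ∈ s | p x c} :=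
  (card_le_card fun x hx => by
    obtain ⟨c, hc, hpc⟩ := h x hx
    exact mem_biUnion.mpr ⟨c, hc, mem_filter.mpr ⟨hx, hpc⟩⟩).trans card_biUnion_le

theorem two_pow_le_sum_div_card_pow {ι : Type*} (s : Finset ι) {n : ℕ} {e a : ι → ℕ}
    (hn : n ≤ ∑ i ∈ s, e i) (he : ∀ i ∈ s, 2 ^ e i ≤ a i) :
    (2 : ℝ) ^ n ≤ ((∑ i ∈ s, (a i : ℝ)) / #s) ^ #s := calc
  (2 : ℝ) ^ n ≤ 2 ^ ∑ i ∈ s, e i := pow_le_pow_right₀ one_le_two hn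
  _ = ∏ i ∈ s, (2 : ℝ) ^ e i := (prod_pow_eq_pow_sum _ _ _).symm
  _ ≤ ∏ i ∈ s, (a i : ℝ) :=
      prod_le_prod (fun _ _ => by positivity) fun i hi => by exact_mod_cast he i hi
  _ ≤ ((∑ i ∈ s, (a i : ℝ)) / #s) ^ #s :=
      Real.prod_le_sum_div_card_pow s fun _ _ => Nat.cast_nonneg _

theorem natCast_le_mul_logb_of_two_pow_le_pow {n C : ℕ} {y : ℝ} (h : (2 : ℝ) ^ n ≤ y ^ C) :
    (n : ℝ) ≤ C * Real.logb 2 y := by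
  have := Real.logb_le_logb_of_le one_lt_two (by positivity) h
  rwa [Real.logb_pow, Real.logb_pow, Real.logb_self_eq_one one_lt_two, mul_one] at this

theorem number_of_episodes_doubling_general (T C m : ℕ) (hC : 1 ≤ C) (hCT : C ≤ T)
    (col : ℕ → Fin C) (t : ℕ → ℕ)
    (htm : t m = T)
    (hmono : ∀ k < m, t k < t (k + 1))
    (N : ℕ → Fin C → ℕ)
    (hN : ∀ k c, N k c = ((Finset.range (t k)).filter (fun i => col i = c)).card)
    (v : ℕ → Fin C → ℕ)
    (hv : ∀ k c, v k c =
      ((Finset.Ico (t k) (t (k + 1))).filter (fun i => col i = c)).card)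
    (hend : ∀ k, k + 1 < m → ∃ c, v k c = max 1 (N k c)) :
    (m : ℝ) ≤ C * Real.logb 2 (8 * T / C) := by
  have hN_succ : ∀ k < m, ∀ c, N (k + 1) c = N k c + v k c := fun k hk c => by
    rw [hN, hN, hv, card_filter_range_eq_add (hmono k hk).le]
  let S : Fin C → Finset ℕ := fun c => {k ∈ range (m - 1) | v k c = max 1 (N k c)}
  have hcover : m - 1 ≤ ∑ c, #(S c) := card_range (m - 1) ▸ card_le_sum_card_filter fun k hk =>
    (hend k (by simp only [mem_range] at hk; omega)).elim fun c hc => ⟨c, mem_univ c, hc⟩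
  have hdouble : ∀ c ∈ univ, 2 ^ #(S c) ≤ 2 * N m c + 1 := fun c _ => by
    refine (two_pow_card_le_of_doubling (f := fun k => N k c) (m := m) ?_ ?_ ?_).trans (by omega)
    · exact fun k hk => mem_range.mpr (by simp only [S, mem_filter, mem_range] at hk; omega)
    · exact fun k hk => by rw [hN_succ k hk]; omega
    · intro k hk
      simp only [S, mem_filter, mem_range] at hk
      rw [hN_succ k (by omega), hk.2]
  have htotal : ∑ c, (2 * N m c + 1) ≤ 4 * T := by
    have hcount : ∑ c, N m c = T := by
      simp only [hN, htm]
      exact (card_eq_sum_card_fiberwise (fun i _ => mem_univ (col i))).symm.trans (card_range T)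
    rw [sum_add_distrib, ← mul_sum, hcount]
    simp only [sum_const, card_univ, Fintype.card_fin, smul_eq_mul, mul_one]
    omega
  have hC1 : (1 : ℝ) ≤ C := by exact_mod_cast hC
  have hT : (0 : ℝ) < T := by exact_mod_cast hC.trans hCT
  have hlog : ((m - 1 : ℕ) : ℝ) ≤ C * Real.logb 2 (4 * T / C) := by
    refine natCast_le_mul_logb_of_two_pow_le_pow <|
      (two_pow_le_sum_div_card_pow univ hcover hdouble).trans ?_
    rw [card_univ, Fintype.card_fin]
    gcongr
    exact_mod_cast htotal
  rw [show (8 : ℝ) * T / C = 2 * (4 * T / C) by ring,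
    Real.logb_mul two_ne_zero (by positivity), Real.logb_self_eq_one one_lt_two, mul_one_add]
  have hm : (m : ℝ) ≤ (m - 1 : ℕ) + 1 := by exact_mod_cast (by omega : m ≤ m - 1 + 1)
  linarith

/-- **Bound on the number of episodes under the doubling criterion.**
`T` steps, each colored by one of `C` colors (`col`), are partitioned into `m`
consecutive episodes with start times `t 0 = 0 < t 1 < … < t m = T`. Within
every episode the in-episode count of each color never exceeds
`max 1 (count before the episode)`, and every episode except the last ends
exactly when the in-episode count of some color reaches this threshold.
Then `m ≤ C * log₂ (8 T / C)`. -/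
theorem number_of_episodes_doubling (T C m : ℕ) (hC : 1 ≤ C) (hCT : C ≤ T)
    (col : ℕ → Fin C) (t : ℕ → ℕ)
    (ht0 : t 0 = 0) (htm : t m = T)
    (hmono : ∀ k < m, t k < t (k + 1))
    (N : ℕ → Fin C → ℕ)
    (hN : ∀ k c, N k c = ((Finset.range (t k)).filter (fun i => col i = c)).card)
    (v : ℕ → Fin C → ℕ)
    (hv : ∀ k c, v k c =
      ((Finset.Ico (t k) (t (k + 1))).filter (fun i => col i = c)).card)
    (hub : ∀ k < m, ∀ c, v k c ≤ max 1 (N k c))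
    (hend : ∀ k, k + 1 < m → ∃ c, v k c = max 1 (N k c)) :
    (m : ℝ) ≤ C * Real.logb 2 (8 * T / C) :=
  number_of_episodes_doubling_general T C m hC hCT col t htm hmono N hN v hv hend
end
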